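/- arXiv:2011.03599 — 6 statements merged into one kernel-verified Lean document; each statement's English description precedes it below -/
import Mathlib

section
/- If G is a chi-squared random variable with k degrees of freedom, then for any x > 0, P(G ≥ k + 2√(xk) + 2x) ≤ exp(−x). -/
open MeasureTheory ProbabilityTheory Real

/-!
Chernoff's method. For a standard Gaussian `Z` and `t < 1/2`, `𝔼[exp (t Z²)] = (1 - 2t)^(-1/2)`,
so `ℙ(G ≥ a) ≤ exp (-t a) (1 - 2t)^(-k/2)`. Write `x = k s²`, so that the threshold is
`a = k (1 + 2s + 2s²)`, and take `t = s / (1 + 2s)`, i.e. `1 - 2t = (1 + 2s)⁻¹`. The exponent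
`-t a + (k/2) log (1 + 2s)` is then at most `-k s²` by `log y ≤ (y - y⁻¹)/2` for `y ≥ 1`.
-/

lemma Real.log_le_half_sub_inv {y : ℝ} (hy : 1 ≤ y) : log y ≤ (y - y⁻¹) / 2 := by
  have h := self_le_sinh_iff.mpr (log_nonneg hy)
  rwa [sinh_eq, exp_neg, exp_log (by linarith)] at h

lemma gaussianPDFReal_zero_one_mul_exp_mul_sq (t y : ℝ) :
    gaussianPDFReal 0 1 y * exp (t * y ^ 2) = (√(2 * π))⁻¹ * exp (-(1 / 2 - t) * y ^ 2) := by
  simp only [gaussianPDFReal, NNReal.coe_one, sub_zero, mul_one]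
  rw [mul_assoc, ← exp_add]
  ring_nf

lemma integrable_exp_mul_sq_gaussianReal {t : ℝ} (ht : t < 1 / 2) :
    Integrable (fun y ↦ exp (t * y ^ 2)) (gaussianReal 0 1) := by
  rw [gaussianReal_of_var_ne_zero _ one_ne_zero,
    integrable_withDensity_iff_integrable_smul' (measurable_gaussianPDF 0 1)
      (ae_of_all _ fun _ ↦ gaussianPDF_lt_top)]
  simp_rw [toReal_gaussianPDF, smul_eq_mul, gaussianPDFReal_zero_one_mul_exp_mul_sq]
  exact (integrable_exp_neg_mul_sq (by linarith)).const_mul _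

lemma integral_exp_mul_sq_gaussianReal {t : ℝ} (ht : t < 1 / 2) :
    ∫ y, exp (t * y ^ 2) ∂gaussianReal 0 1 = (√(1 - 2 * t))⁻¹ := by
  have hb : 0 < 1 / 2 - t := by linarith
  rw [integral_gaussianReal_eq_integral_smul one_ne_zero]
  simp_rw [smul_eq_mul, gaussianPDFReal_zero_one_mul_exp_mul_sq]
  rw [integral_const_mul, integral_gaussian, ← sqrt_inv, ← sqrt_inv,
    ← sqrt_mul' _ (div_pos pi_pos hb).le]
  congr 1
  field_simp

theorem ProbabilityTheory.iIndepFun.measureReal_sum_sq_ge_le {Ω ι : Type*} [MeasurableSpace Ω]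
    {μ : Measure Ω} [IsProbabilityMeasure μ] [Fintype ι] {Z : ι → Ω → ℝ}
    (hindep : iIndepFun Z μ) (hlaw : ∀ i, HasLaw (Z i) (gaussianReal 0 1) μ)
    {t : ℝ} (ht₀ : 0 ≤ t) (ht : t < 1 / 2) (a : ℝ) :
    μ.real {ω | a ≤ ∑ i, Z i ω ^ 2} ≤ exp (-t * a) * (√(1 - 2 * t))⁻¹ ^ Fintype.card ι := by
  wlog hmeas : ∀ i, Measurable (Z i) generalizing Z
  · have hae : ∀ i, Z i =ᵐ[μ] (hlaw i).aemeasurable.mk (Z i) :=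
      fun i ↦ (hlaw i).aemeasurable.ae_eq_mk
    calc μ.real {ω | a ≤ ∑ i, Z i ω ^ 2}
        = μ.real {ω | a ≤ ∑ i, (hlaw i).aemeasurable.mk (Z i) ω ^ 2} := by
          refine measureReal_congr ?_
          filter_upwards [ae_all_iff.mpr hae] with ω hω
          change (a ≤ _) = (a ≤ _)
          simp only [hω]
      _ ≤ _ := this (hindep.congr hae) (fun i ↦ (hlaw i).congr (hae i).symm)
          fun i ↦ (hlaw i).aemeasurable.measurable_mk
  set Y : ι → Ω → ℝ := fun i ω ↦ Z i ω ^ 2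
  have hY_meas : ∀ i, Measurable (Y i) := fun i ↦ (hmeas i).pow_const 2
  have hY_indep : iIndepFun Y μ := hindep.comp _ fun _ ↦ measurable_id.pow_const 2
  have hY_int : ∀ i, Integrable (fun ω ↦ exp (t * Y i ω)) μ := fun i ↦ by
    have h := integrable_exp_mul_sq_gaussianReal ht
    rwa [← (hlaw i).map_eq, integrable_map_measure (by fun_prop) (hlaw i).aemeasurable] at h
  have hY_mgf : ∀ i, mgf (Y i) μ t = (√(1 - 2 * t))⁻¹ := fun i ↦
    ((hlaw i).integral_comp (by fun_prop)).trans (integral_exp_mul_sq_gaussianReal ht)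
  have hchernoff := measure_ge_le_exp_mul_mgf a ht₀
    (hY_indep.integrable_exp_mul_sum hY_meas (s := Finset.univ) fun i _ ↦ hY_int i)
  rw [hY_indep.mgf_sum hY_meas, Finset.prod_congr rfl fun i _ ↦ hY_mgf i, Finset.prod_const,
    Finset.card_univ] at hchernoff
  simpa only [Finset.sum_apply, Y] using hchernoff

lemma exp_neg_mul_mul_inv_sqrt_pow_le {s : ℝ} (hs : 0 ≤ s) (n : ℕ) :
    exp (-(s / (1 + 2 * s)) * (n * (1 + 2 * s + 2 * s ^ 2))) *
      (√(1 - 2 * (s / (1 + 2 * s))))⁻¹ ^ n ≤ exp (-(n * s ^ 2)) := by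
  have hpos : 0 < 1 + 2 * s := by linarith
  have hsqrt : (√(1 - 2 * (s / (1 + 2 * s))))⁻¹ = exp (log (1 + 2 * s) / 2) := by
    rw [show 1 - 2 * (s / (1 + 2 * s)) = (1 + 2 * s)⁻¹ by field_simp; ring, sqrt_inv, inv_inv,
      ← exp_log (sqrt_pos.2 hpos), log_sqrt hpos.le]
  rw [hsqrt, ← exp_nat_mul, ← exp_add, exp_le_exp]
  have hlog := log_le_half_sub_inv (y := 1 + 2 * s) (by linarith)
  calc -(s / (1 + 2 * s)) * (n * (1 + 2 * s + 2 * s ^ 2)) + n * (log (1 + 2 * s) / 2)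
      ≤ -(s / (1 + 2 * s)) * (n * (1 + 2 * s + 2 * s ^ 2))
          + n * ((1 + 2 * s - (1 + 2 * s)⁻¹) / 2 / 2) := by gcongr
    _ = -(n * s ^ 2) := by field_simp; ring

/-- Laurent–Massart upper tail bound for a chi-squared random variable with `k`
degrees of freedom, realised as a sum of squares of `k` i.i.d. standard Gaussians. -/
theorem laurent_massart_chisq_upper_tail
    {Ω : Type*} [MeasureSpace Ω] [IsProbabilityMeasure (ℙ : Measure Ω)]
    (k : ℕ) (Z : Fin k → Ω → ℝ)
    (hindep : iIndepFun Z ℙ)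
    (hlaw : ∀ i, Measure.map (Z i) ℙ = gaussianReal 0 1)
    (G : Ω → ℝ) (hG : ∀ ω, G ω = ∑ i, (Z i ω) ^ 2)
    (x : ℝ) (hx : 0 < x) :
    ℙ {ω | (k : ℝ) + 2 * Real.sqrt (x * k) + 2 * x ≤ G ω} ≤
      ENNReal.ofReal (Real.exp (-x)) := by
  rcases k.eq_zero_or_pos with rfl | hk
  · have hempty : {ω | ((0 : ℕ) : ℝ) + 2 * √(x * (0 : ℕ)) + 2 * x ≤ G ω} = ∅ :=
      Set.eq_empty_of_forall_notMem fun ω hω ↦ by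
        have : 2 * x ≤ 0 := by simpa [hG] using hω
        linarith
    simp only [hempty, measure_empty, zero_le]
  have hlaw' : ∀ i, HasLaw (Z i) (gaussianReal 0 1) ℙ := fun i ↦
    ⟨.of_map_ne_zero (hlaw i ▸ IsProbabilityMeasure.ne_zero _), hlaw i⟩
  obtain ⟨s, hs, rfl⟩ : ∃ s, 0 ≤ s ∧ x = k * s ^ 2 :=
    ⟨√(x / k), sqrt_nonneg _, by rw [sq_sqrt (by positivity)]; field_simp⟩
  have hthreshold : (k : ℝ) + 2 * √(k * s ^ 2 * k) + 2 * (k * s ^ 2)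
      = k * (1 + 2 * s + 2 * s ^ 2) := by
    rw [show (k : ℝ) * s ^ 2 * k = (k * s) ^ 2 by ring, sqrt_sq (by positivity)]
    ring
  simp_rw [hthreshold, hG]
  rw [← ofReal_measureReal]
  refine ENNReal.ofReal_le_ofReal ?_
  calc _ ≤ _ := hindep.measureReal_sum_sq_ge_le hlaw' (t := s / (1 + 2 * s))
        (by positivity) (by rw [div_lt_iff₀ (by positivity)]; linarith) _
    _ ≤ _ := by simpa using exp_neg_mul_mul_inv_sqrt_pow_le hs k
end

section
/- If H is a noncentral chi-squared random variable with k degrees of freedom and noncentrality parameter ν, then for any y > 0, P(H ≥ k + ν − 2√((k + 2ν)y)) ≥ 1 − exp(−y). -/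
open MeasureTheory ProbabilityTheory Real

/-! Chernoff's method. For `t ≤ 0` and `Z` standard Gaussian, completing the square gives
`E exp (t (Z + a)²) = exp (t a² / (1 - 2t)) / √(1 - 2t)`, which is at most
`exp (t (1 + a²) + t² (1 + 2a²))` by `log (1 + x) ≥ 2x / (x + 2)`. By independence the mgf of
`H` at `t` is then at most `exp (t (k + ν) + t² (k + 2ν))`, and the lower-tail Chernoff bound at
`t = -√(y / (k + 2ν))` gives `P(H ≤ k + ν - 2√((k + 2ν) y)) ≤ exp (-y)`. -/

lemma integral_exp_mul_sq_add_gaussianReal {t : ℝ} (ht : 2 * t < 1) (a : ℝ) :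
    ∫ x, exp (t * (x + a) ^ 2) ∂gaussianReal 0 1 =
      exp (t * a ^ 2 / (1 - 2 * t)) / √(1 - 2 * t) := by
  have hb : 0 < 1 - 2 * t := by linarith
  have hsq (x : ℝ) : gaussianPDFReal 0 1 x • exp (t * (x + a) ^ 2) = (√(2 * π))⁻¹ *
      exp (t * a ^ 2 / (1 - 2 * t)) *
        exp (-((1 - 2 * t) / 2) * (x - 2 * t * a / (1 - 2 * t)) ^ 2) := by
    simp only [gaussianPDFReal, NNReal.coe_one, smul_eq_mul, mul_assoc, ← exp_add]
    congr 2
    · norm_num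
    · field_simp
      ring
  rw [integral_gaussianReal_eq_integral_smul one_ne_zero]
  simp_rw [hsq]
  rw [integral_const_mul, integral_sub_right_eq_self (fun x ↦ exp (-((1 - 2 * t) / 2) * x ^ 2)),
    integral_gaussian, div_div_eq_mul_div, sqrt_div (by positivity), mul_comm π 2]
  field_simp

lemma exp_mul_div_div_sqrt_le_of_nonpos {t : ℝ} (ht : t ≤ 0) (a : ℝ) :
    exp (t * a ^ 2 / (1 - 2 * t)) / √(1 - 2 * t) ≤
      exp (t * (1 + a ^ 2) + t ^ 2 * (1 + 2 * a ^ 2)) := by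
  have hb : 0 < 1 - 2 * t := by linarith
  have hlog : -log (1 - 2 * t) / 2 ≤ t + t ^ 2 := by
    have hpade := le_log_one_add_of_nonneg (x := -2 * t) (by linarith)
    rw [show 1 + -2 * t = 1 - 2 * t by ring] at hpade
    have : -2 * t - 2 * t ^ 2 ≤ 2 * (-2 * t) / (-2 * t + 2) := by
      rw [le_div_iff₀ (by linarith)]
      nlinarith [mul_nonneg (neg_nonneg.2 ht) (sq_nonneg t)]
    linarith
  have hquad : t * a ^ 2 / (1 - 2 * t) ≤ t * a ^ 2 + 2 * t ^ 2 * a ^ 2 := by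
    rw [div_le_iff₀ hb]
    nlinarith [mul_nonneg (mul_nonneg (neg_nonneg.2 ht) (sq_nonneg t)) (sq_nonneg a)]
  rw [div_le_iff₀ (by positivity), ← exp_log (sqrt_pos.2 hb), log_sqrt hb.le, ← exp_add,
    exp_le_exp]
  linarith

section NoncentralChiSquared

variable {Ω : Type*} [MeasurableSpace Ω] {μ : Measure Ω}

lemma aemeasurable_of_map_eq_gaussianReal {X : Ω → ℝ} {m : ℝ} {v : NNReal}
    (hX : μ.map X = gaussianReal m v) : AEMeasurable X μ :=
  .of_map_ne_zero (by simp [hX, NeZero.ne])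

lemma mgf_sq_add_of_map_eq_gaussianReal {X : Ω → ℝ} (hX : μ.map X = gaussianReal 0 1) (a : ℝ)
    {t : ℝ} (ht : 2 * t < 1) :
    mgf (fun ω ↦ (X ω + a) ^ 2) μ t = exp (t * a ^ 2 / (1 - 2 * t)) / √(1 - 2 * t) := by
  rw [mgf, ← integral_exp_mul_sq_add_gaussianReal ht, ← hX,
    integral_map (aemeasurable_of_map_eq_gaussianReal hX) (by fun_prop)]

variable {ι : Type*} [Fintype ι] {Z : ι → Ω → ℝ}

lemma mgf_sum_sq_add_le (hindep : iIndepFun Z μ) (hlaw : ∀ i, μ.map (Z i) = gaussianReal 0 1)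
    (a : ι → ℝ) {t : ℝ} (ht : t ≤ 0) :
    mgf (fun ω ↦ ∑ i, (Z i ω + a i) ^ 2) μ t ≤
      exp (t * (Fintype.card ι + ∑ i, a i ^ 2) + t ^ 2 * (Fintype.card ι + 2 * ∑ i, a i ^ 2)) := by
  have hZm (i : ι) : AEMeasurable (Z i) μ := aemeasurable_of_map_eq_gaussianReal (hlaw i)
  have hsum : (fun ω ↦ ∑ i, (Z i ω + a i) ^ 2) = ∑ i, fun ω ↦ (Z i ω + a i) ^ 2 := by
    ext ω; simp
  have hindep' : iIndepFun (fun i ω ↦ (Z i ω + a i) ^ 2) μ :=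
    hindep.comp (fun i x ↦ (x + a i) ^ 2) fun i ↦ by fun_prop
  rw [hsum, hindep'.mgf_sum₀ fun i ↦ by fun_prop]
  calc ∏ i, mgf (fun ω ↦ (Z i ω + a i) ^ 2) μ t
      ≤ ∏ i, exp (t * (1 + a i ^ 2) + t ^ 2 * (1 + 2 * a i ^ 2)) := by
        refine Finset.prod_le_prod (fun i _ ↦ mgf_nonneg) fun i _ ↦ ?_
        rw [mgf_sq_add_of_map_eq_gaussianReal (hlaw i) _ (by linarith)]
        exact exp_mul_div_div_sqrt_le_of_nonpos ht _
    _ = _ := by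
        rw [← exp_sum]
        congr 1
        simp only [mul_add, Finset.sum_add_distrib, ← Finset.mul_sum, Finset.sum_const,
          Finset.card_univ, nsmul_eq_mul, mul_one]
        ring

lemma measureReal_sum_sq_add_le_le_exp_neg [Nonempty ι] (hindep : iIndepFun Z μ)
    (hlaw : ∀ i, μ.map (Z i) = gaussianReal 0 1) (a : ι → ℝ) {y : ℝ} (hy : 0 ≤ y) :
    μ.real {ω | ∑ i, (Z i ω + a i) ^ 2 ≤ Fintype.card ι + ∑ i, a i ^ 2 -
      2 * √((Fintype.card ι + 2 * ∑ i, a i ^ 2) * y)} ≤ exp (-y) := by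
  have := hindep.isProbabilityMeasure
  set s : ℝ := Fintype.card ι + 2 * ∑ i, a i ^ 2
  have hs : 0 < s := by positivity
  have hZm (i : ι) : AEMeasurable (Z i) μ := aemeasurable_of_map_eq_gaussianReal (hlaw i)
  -- minimiser of the Chernoff exponent `t * (k + ν - m) + t ^ 2 * s`
  set t : ℝ := -√(y / s)
  have ht : t ≤ 0 := neg_nonpos.2 (sqrt_nonneg _)
  have hint : Integrable (fun ω ↦ exp (t * ∑ i, (Z i ω + a i) ^ 2)) μ := by
    refine .of_bound (by fun_prop) 1 (ae_of_all _ fun ω ↦ ?_)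
    rw [norm_of_nonneg (exp_pos _).le, exp_le_one_iff]
    exact mul_nonpos_of_nonpos_of_nonneg ht (by positivity)
  refine (measure_le_le_exp_mul_mgf _ ht hint).trans ?_
  calc _ ≤ exp (-t * (Fintype.card ι + ∑ i, a i ^ 2 - 2 * √(s * y))) *
        exp (t * (Fintype.card ι + ∑ i, a i ^ 2) + t ^ 2 * s) :=
        mul_le_mul_of_nonneg_left (mgf_sum_sq_add_le hindep hlaw a ht) (exp_pos _).le
    _ = exp (-y) := by
        have ht2 : t ^ 2 * s = y := by
          rw [neg_sq, sq_sqrt (by positivity), div_mul_cancel₀ _ hs.ne']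
        have hts : t * √(s * y) = -y := by
          rw [neg_mul, ← sqrt_mul (by positivity), show y / s * (s * y) = y ^ 2 by field_simp,
            sqrt_sq hy]
        rw [← exp_add]
        congr 1
        linear_combination 2 * hts + ht2

end NoncentralChiSquared

/-- Birgé lower-tail bound for a noncentral chi-squared random variable with `k`
degrees of freedom and noncentrality `ν`, realised as `H = Σ (Z i + a i)^2` with
`Z i` i.i.d. standard Gaussians and `Σ (a i)^2 = ν`. -/
theorem noncentral_chisq_lower_tail
    {Ω : Type*} [MeasureSpace Ω] [IsProbabilityMeasure (ℙ : Measure Ω)]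
    (k : ℕ) (Z : Fin k → Ω → ℝ)
    (hindep : iIndepFun Z ℙ)
    (hlaw : ∀ i, Measure.map (Z i) ℙ = gaussianReal 0 1)
    (a : Fin k → ℝ) (ν : ℝ) (hν : ∑ i, (a i) ^ 2 = ν)
    (H : Ω → ℝ) (hH : ∀ ω, H ω = ∑ i, (Z i ω + a i) ^ 2)
    (y : ℝ) (hy : 0 < y) :
    ENNReal.ofReal (1 - Real.exp (-y)) ≤
      ℙ {ω | (k : ℝ) + ν - 2 * Real.sqrt ((k + 2 * ν) * y) ≤ H ω} := by
  rcases k.eq_zero_or_pos with rfl | hk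
  · simp [hH, ← hν, (exp_pos _).le]
  have : Nonempty (Fin k) := ⟨⟨0, hk⟩⟩
  have hlower := measureReal_sum_sq_add_le_le_exp_neg hindep hlaw a hy.le
  simp only [Fintype.card_fin, hν, ← hH] at hlower
  set A := {ω | (k : ℝ) + ν - 2 * √((k + 2 * ν) * y) ≤ H ω}
  have hsub : Aᶜ ⊆ {ω | H ω ≤ k + ν - 2 * √((k + 2 * ν) * y)} :=
    fun _ hω ↦ (not_le.1 (Set.notMem_ofPred_iff.1 hω)).le
  have hcompl : (ℙ : Measure Ω).real Aᶜ ≤ exp (-y) := (measureReal_mono hsub).trans hlower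
  have hunion : 1 ≤ (ℙ : Measure Ω).real A + (ℙ : Measure Ω).real Aᶜ := by
    simpa using measureReal_union_le (μ := (ℙ : Measure Ω)) A Aᶜ
  exact ENNReal.ofReal_le_of_le_toReal (by rw [← measureReal_def]; linarith)
end

section
/- For 0 < s ≤ 1 and x > 0, the normalized upper incomplete gamma function satisfies Γ(s, x)/Γ(s) ≤ e^{−x}·(1 + x/s)^{s−1}. -/
open Real MeasureTheory Set
open scoped NNReal ENNReal

private lemma tangent_aux {s x u : ℝ} (hs : 0 < s) (hx : 0 < x) (hu : 0 ≤ u) :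
    u / (u + x) ≤ s / (s + x) + x / (s + x) ^ 2 * (u - s) := by
  have hux : 0 < u + x := by linarith
  have hsx : 0 < s + x := by linarith
  have key : s / (s + x) + x / (s + x) ^ 2 * (u - s) - u / (u + x)
      = x * (u - s) ^ 2 / ((u + x) * (s + x) ^ 2) := by
    field_simp
    ring
  have h0 : 0 ≤ x * (u - s) ^ 2 / ((u + x) * (s + x) ^ 2) := by positivity
  linarith

/-- For `0 < s ≤ 1` and `x > 0`, the normalised upper incomplete gamma function
satisfies `Γ(s, x)/Γ(s) ≤ e^{-x} (1 + x/s)^{s-1}`. -/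
theorem upper_incomplete_gamma_ratio_bound (s x : ℝ) (hs0 : 0 < s) (hs1 : s ≤ 1)
    (hx : 0 < x) :
    (∫ t in Set.Ioi x, t ^ (s - 1) * Real.exp (-t)) / Real.Gamma s ≤
      Real.exp (-x) * (1 + x / s) ^ (s - 1) := by
  -- translation step (valid for all s)
  have htrans : (∫ t in Set.Ioi x, t ^ (s - 1) * Real.exp (-t))
      = Real.exp (-x) * ∫ u in Ioi (0:ℝ), Real.exp (-u) * (u + x) ^ (s - 1) := by
    have h := (measurePreserving_add_right (volume : Measure ℝ) x).setIntegral_preimage_emb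
      (measurableEmbedding_addRight x) (fun t => t ^ (s - 1) * Real.exp (-t)) (Ioi x)
    have hpre : (fun u : ℝ => u + x) ⁻¹' (Ioi x) = Ioi 0 := by
      ext u; simp [lt_add_iff_pos_left]
    rw [← h, hpre, ← integral_const_mul]
    apply setIntegral_congr_fun measurableSet_Ioi
    intro u _
    dsimp only
    rw [show -(u + x) = -x + -u by ring, Real.exp_add]
    ring
  rcases eq_or_lt_of_le hs1 with hseq | hslt
  · -- s = 1 : equality
    subst hseq
    rw [htrans, Real.Gamma_one, div_one]
    simp only [sub_self, Real.rpow_zero, mul_one, one_mul]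
    rw [integral_exp_neg_Ioi_zero, mul_one]
  -- main case s < 1
  set G := Real.Gamma s with hGdef
  have hG : 0 < G := Real.Gamma_pos_of_pos hs0
  set w : ℝ → ℝ≥0 := fun u => Real.toNNReal (Real.exp (-u) * u ^ (s - 1) / G) with hwdef
  have hwmeas : Measurable w := by
    apply Measurable.real_toNNReal
    fun_prop
  set μ : Measure ℝ := (volume.restrict (Ioi 0)).withDensity (fun u => (w u : ℝ≥0∞)) with hμdef
  have hWint' : IntegrableOn (fun u => Real.exp (-u) * u ^ (s - 1) / G) (Ioi 0) :=
    (Real.GammaIntegral_convergent hs0).div_const G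
  have hWeq : ∀ u ∈ Ioi (0:ℝ), ((w u : ℝ≥0) : ℝ) = Real.exp (-u) * u ^ (s - 1) / G := by
    intro u hu
    rw [hwdef]
    exact Real.coe_toNNReal _ (div_nonneg (mul_nonneg (exp_nonneg _)
      (Real.rpow_nonneg (le_of_lt hu) _)) hG.le)
  have hμprob : IsProbabilityMeasure μ := by
    constructor
    rw [hμdef, withDensity_apply _ MeasurableSet.univ, Measure.restrict_univ]
    have h1 : ∀ᵐ u ∂(volume.restrict (Ioi (0:ℝ))),
        ((w u : ℝ≥0) : ℝ≥0∞) = ENNReal.ofReal (Real.exp (-u) * u ^ (s - 1) / G) := by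
      filter_upwards with u; rfl
    rw [lintegral_congr_ae h1,
      ← ofReal_integral_eq_lintegral_ofReal hWint'
        ((ae_restrict_iff' measurableSet_Ioi).2 (by
          filter_upwards with u hu
          exact div_nonneg (mul_nonneg (exp_nonneg _) (Real.rpow_nonneg hu.le _)) hG.le))]
    rw [integral_div, ← Real.Gamma_eq_integral hs0, div_self hG.ne', ENNReal.ofReal_one]
  have hae : ∀ᵐ u ∂μ, u ∈ Ioi (0:ℝ) :=
    (withDensity_absolutelyContinuous _ _).ae_le (ae_restrict_mem measurableSet_Ioi)
  have h_transfer : ∀ g : ℝ → ℝ, ∫ u, g u ∂μ = ∫ u in Ioi (0:ℝ), ((w u : ℝ)) * g u := by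
    intro g
    rw [hμdef, integral_withDensity_eq_integral_smul hwmeas]
    simp [NNReal.smul_def]
  have hmeanint : IntegrableOn (fun u => Real.exp (-u) * u ^ (s + 1 - 1) / G) (Ioi 0) :=
    (Real.GammaIntegral_convergent (by linarith)).div_const G
  have heq1 : ∀ u ∈ Ioi (0:ℝ), ((w u : ℝ)) * u = Real.exp (-u) * u ^ (s + 1 - 1) / G := by
    intro u hu
    rw [hWeq u hu, show s + 1 - 1 = (s - 1) + 1 by ring, Real.rpow_add_one (ne_of_gt hu)]
    ring
  have hid_int : Integrable (fun u => u) μ := by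
    rw [hμdef, integrable_withDensity_iff_integrable_smul hwmeas]
    apply hmeanint.congr
    filter_upwards [ae_restrict_mem measurableSet_Ioi] with u hu
    rw [NNReal.smul_def, smul_eq_mul, heq1 u hu]
  have hmean : ∫ u, u ∂μ = s := by
    rw [h_transfer, setIntegral_congr_fun measurableSet_Ioi heq1, integral_div,
      ← Real.Gamma_eq_integral (by linarith : (0:ℝ) < s + 1), Real.Gamma_add_one hs0.ne', hGdef,
      mul_div_assoc, div_self (Real.Gamma_pos_of_pos hs0).ne', mul_one]
  -- the function f and its properties
  set f : ℝ → ℝ := fun u => u / (u + x) with hfdef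
  have hfmeas : Measurable f := measurable_id.div (measurable_id.add_const x)
  have hfmem : ∀ u : ℝ, u ∈ Ioi (0:ℝ) → f u ∈ Icc (0:ℝ) 1 := by
    intro u hu
    have hu0 : (0:ℝ) < u := hu
    have hux : 0 < u + x := by linarith
    exact ⟨div_nonneg hu0.le hux.le, (div_le_one hux).2 (by linarith)⟩
  have hfs : ∀ᵐ u ∂μ, f u ∈ Icc (0:ℝ) 1 := by
    filter_upwards [hae] with u hu using hfmem u hu
  have hfi : Integrable f μ := by
    apply Integrable.mono' (integrable_const (1:ℝ)) hfmeas.aestronglyMeasurable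
    filter_upwards [hfs] with u hu
    rw [Real.norm_eq_abs, abs_of_nonneg hu.1]
    exact hu.2
  have hgi : Integrable ((fun t : ℝ => t ^ (1 - s)) ∘ f) μ := by
    apply Integrable.mono' (integrable_const (1:ℝ))
    · have hm : Measurable fun t : ℝ => t ^ (1 - s) := by fun_prop
      exact (hm.comp hfmeas).aestronglyMeasurable
    filter_upwards [hfs] with u hu
    rw [Function.comp_apply, Real.norm_eq_abs, abs_of_nonneg (Real.rpow_nonneg hu.1 _)]
    exact Real.rpow_le_one hu.1 hu.2 (by linarith)
  -- the mean of f is at most s/(s+x)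
  have hsx : 0 < s + x := by linarith
  have hfint_le : ∫ u, f u ∂μ ≤ s / (s + x) := by
    have hLint : Integrable (fun u => s / (s + x) + x / (s + x) ^ 2 * (u - s)) μ :=
      (integrable_const _).add (((hid_int.sub (integrable_const s)).const_mul _))
    have hmono : ∫ u, f u ∂μ ≤ ∫ u, (s / (s + x) + x / (s + x) ^ 2 * (u - s)) ∂μ := by
      apply integral_mono_ae hfi hLint
      filter_upwards [hae] with u hu using tangent_aux hs0 hx (le_of_lt hu)
    have hLval : ∫ u, (s / (s + x) + x / (s + x) ^ 2 * (u - s)) ∂μ = s / (s + x) := by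
      have hrw : (fun u : ℝ => s / (s + x) + x / (s + x) ^ 2 * (u - s))
          = fun u : ℝ => (s / (s + x) - x / (s + x) ^ 2 * s) + x / (s + x) ^ 2 * u := by
        funext u; ring
      rw [hrw, integral_add (integrable_const _) (hid_int.const_mul _), integral_const,
        integral_const_mul, hmean]
      simp
    linarith
  -- Jensen
  have hconc : ConcaveOn ℝ (Icc (0:ℝ) 1) (fun t : ℝ => t ^ (1 - s)) :=
    (Real.concaveOn_rpow (by linarith) (by linarith)).subset Icc_subset_Ici_self (convex_Icc _ _)
  have hcont : ContinuousOn (fun t : ℝ => t ^ (1 - s)) (Icc (0:ℝ) 1) := fun t _ =>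
    (Real.continuousAt_rpow_const t _ (Or.inr (by linarith))).continuousWithinAt
  have hJ : (∫ u, (f u) ^ (1 - s) ∂μ) ≤ (∫ u, f u ∂μ) ^ (1 - s) :=
    hconc.le_map_integral hcont isClosed_Icc hfs hfi hgi
  have hf_nonneg : 0 ≤ ∫ u, f u ∂μ := by
    apply integral_nonneg_of_ae
    filter_upwards [hfs] with u hu using hu.1
  have hJ2 : (∫ u, (f u) ^ (1 - s) ∂μ) ≤ (s / (s + x)) ^ (1 - s) :=
    hJ.trans (Real.rpow_le_rpow hf_nonneg hfint_le (by linarith))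
  -- identify the Jensen integral
  have hkey : ∫ u, (f u) ^ (1 - s) ∂μ
      = (∫ u in Ioi (0:ℝ), Real.exp (-u) * (u + x) ^ (s - 1)) / G := by
    rw [h_transfer, ← integral_div]
    apply setIntegral_congr_fun measurableSet_Ioi
    intro u hu
    have hu0 : (0:ℝ) < u := hu
    have hux : 0 < u + x := by linarith
    dsimp only
    rw [hWeq u hu, hfdef]
    rw [Real.div_rpow hu0.le hux.le]
    rw [show Real.exp (-u) * u ^ (s - 1) / G * (u ^ (1 - s) / (u + x) ^ (1 - s))
        = Real.exp (-u) * (u ^ (s - 1) * u ^ (1 - s)) * ((u + x) ^ (1 - s))⁻¹ / G by ring]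
    rw [← Real.rpow_add hu0, ← Real.rpow_neg hux.le]
    norm_num
  -- final assembly
  have hfinal : (1 + x / s) ^ (s - 1) = (s / (s + x)) ^ (1 - s) := by
    have h1 : 1 + x / s = (s + x) / s := by field_simp
    rw [h1, show s - 1 = -(1 - s) by ring, Real.rpow_neg (by positivity),
      ← Real.inv_rpow (by positivity), inv_div]
  rw [htrans, hfinal, mul_div_assoc]
  have h3 : (∫ u in Ioi (0:ℝ), Real.exp (-u) * (u + x) ^ (s - 1)) / G
      ≤ (s / (s + x)) ^ (1 - s) := hkey ▸ hJ2
  exact mul_le_mul_of_nonneg_left h3 (Real.exp_nonneg _)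
end

section
/- Let G ~ χ²_1 and α > 0, and let D' = max{G − α, 0}. Then for all x > 0, P(D' > x) ≤ (1 − p_α)·e^{−x/2}, where p_α = γ(1/2, α/2)/Γ(1/2) is the probability that a χ²_1 variable is at most α. Equivalently, D' is stochastically dominated by the random variable N which equals 0 with probability p_α and is Exponential with rate 1/2 with probability 1 − p_α. -/
open MeasureTheory ProbabilityTheory Real
open Set

lemma stc_int : IntegrableOn (fun t : ℝ => t ^ (-(1:ℝ)/2) * Real.exp (-t)) (Set.Ioi 0) := by
  have h := Real.GammaIntegral_convergent (s := 1/2) (by norm_num)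
  have : (fun t : ℝ => t ^ (-(1:ℝ)/2) * Real.exp (-t))
      = fun t : ℝ => Real.exp (-t) * t ^ ((1:ℝ)/2 - 1) := by
    funext t; rw [mul_comm]; norm_num
  rw [this]; exact h

lemma stc_int' {a : ℝ} (ha : 0 ≤ a) :
    IntegrableOn (fun t : ℝ => t ^ (-(1:ℝ)/2) * Real.exp (-t)) (Set.Ioi a) :=
  stc_int.mono_set (Set.Ioi_subset_Ioi ha)

lemma stc_image {b : ℝ} (hb : 0 ≤ b) :
    (fun y : ℝ => y^2/2) '' Set.Ioi b = Set.Ioi (b^2/2) := by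
  ext t
  simp only [Set.mem_image, Set.mem_Ioi]
  constructor
  · rintro ⟨y, hy, rfl⟩; nlinarith
  · intro ht
    have ht0 : 0 ≤ 2*t := by nlinarith
    refine ⟨Real.sqrt (2*t), ?_, ?_⟩
    · have : b = Real.sqrt (b^2) := (Real.sqrt_sq hb).symm
      rw [this]
      exact Real.sqrt_lt_sqrt (sq_nonneg b) (by linarith)
    · rw [Real.sq_sqrt ht0]; ring

lemma stc_trans (d h : ℝ) (f : ℝ → ℝ) :
    ∫ t in Set.Ioi (d + h), f t = ∫ s in Set.Ioi d, f (s + h) := by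
  have him : (fun s : ℝ => s + h) '' Set.Ioi d = Set.Ioi (d + h) :=
    Set.image_add_const_Ioi h d
  have := integral_image_eq_integral_abs_deriv_smul (f := fun s : ℝ => s + h)
    (f' := fun _ => (1:ℝ)) (measurableSet_Ioi (a := d))
    (fun x _ => ((hasDerivAt_id x).add_const h).hasDerivWithinAt)
    (fun u _ v _ huv => by simpa using huv) f
  rw [him] at this
  simpa using this

lemma stc_subst {b : ℝ} (hb : 0 < b) :
    ∫ t in Set.Ioi (b^2/2), t ^ (-(1:ℝ)/2) * Real.exp (-t)
      = Real.sqrt 2 * ∫ y in Set.Ioi b, Real.exp (-y^2/2) := by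
  have him := stc_image hb.le
  have hder : ∀ x ∈ Set.Ioi b, HasDerivWithinAt (fun y : ℝ => y^2/2) x (Set.Ioi b) x := by
    intro x _
    have : HasDerivAt (fun y : ℝ => y^2/2) ((2 * x^1)/2) x := (hasDerivAt_pow 2 x).div_const 2
    simpa using this.hasDerivWithinAt
  have hinj : Set.InjOn (fun y : ℝ => y^2/2) (Set.Ioi b) := by
    intro u hu v hv huv
    simp only [Set.mem_Ioi] at hu hv
    have h2 : (u - v) * (u + v) = 0 := by
      simp only at huv; linear_combination 2*huv
    rcases mul_eq_zero.1 h2 with h3 | h3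
    · linarith
    · linarith
  have := integral_image_eq_integral_abs_deriv_smul (measurableSet_Ioi (a := b))
    hder hinj (fun t : ℝ => t ^ (-(1:ℝ)/2) * Real.exp (-t))
  rw [him] at this
  rw [this, ← integral_const_mul]
  refine setIntegral_congr_fun (measurableSet_Ioi) (fun y hy => ?_)
  simp only [Set.mem_Ioi] at hy
  have hy0 : 0 < y := lt_trans hb hy
  have h1 : (y^2/2 : ℝ) ^ (-(1:ℝ)/2) = (Real.sqrt (y^2/2))⁻¹ := by
    rw [show (-(1:ℝ)/2) = -(1/2) by norm_num, Real.rpow_neg (by positivity),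
      ← Real.sqrt_eq_rpow]
  have h2 : Real.sqrt (y^2/2) = y / Real.sqrt 2 := by
    rw [show (y^2/2 : ℝ) = y^2 / 2 by ring, Real.sqrt_div (sq_nonneg y),
      Real.sqrt_sq hy0.le]
  have hs2 : (0:ℝ) < Real.sqrt 2 := Real.sqrt_pos.2 (by norm_num)
  rw [smul_eq_mul, abs_of_pos hy0, h1, h2]
  rw [show -(y^2/2) = -y^2/2 by ring]
  field_simp
/-- The soft-thresholded chi-squared variable `D' = max (G - α) 0`, with `G ~ χ²₁`,
is stochastically dominated by a mixture of a point mass at `0` (with probability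
`p_α = γ(1/2, α/2)/Γ(1/2)`) and an `Exp(1/2)` random variable:
for all `x > 0`, `P(D' > x) ≤ (1 - p_α) e^{-x/2}`. -/
theorem soft_threshold_chisq_dominated
    {Ω : Type*} [MeasureSpace Ω] [IsProbabilityMeasure (ℙ : Measure Ω)]
    (Z : Ω → ℝ) (hZ : Measure.map Z ℙ = gaussianReal 0 1)
    (α : ℝ) (hα : 0 < α)
    (D : Ω → ℝ) (hD : ∀ ω, D ω = max ((Z ω) ^ 2 - α) 0)
    (p : ℝ)
    (hp : p = (∫ t in Set.Ioc (0:ℝ) (α / 2), t ^ (-(1:ℝ)/2) * Real.exp (-t)) /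
      Real.Gamma (1/2)) :
    ∀ x > (0:ℝ), ℙ {ω | x < D ω} ≤ ENNReal.ofReal ((1 - p) * Real.exp (-x / 2)) := by
  intro x hx
  set f : ℝ → ℝ := fun t => t ^ (-(1:ℝ)/2) * Real.exp (-t) with hf
  set c : ℝ := x + α with hc
  have hc0 : 0 < c := by positivity
  set b : ℝ := Real.sqrt c with hb
  have hb0 : 0 < b := Real.sqrt_pos.2 hc0
  have hbsq : b ^ 2 = c := Real.sq_sqrt hc0.le
  have hZm : AEMeasurable Z ℙ := by
    by_contra h
    rw [Measure.map_of_not_aemeasurable h] at hZ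
    have : (0 : Measure ℝ) Set.univ = 1 := by
      rw [hZ]; exact measure_univ
    simp at this
  have hset : {ω | x < D ω} = Z ⁻¹' {y : ℝ | c < y ^ 2} := by
    ext ω
    simp only [Set.mem_setOf_eq, Set.mem_preimage, hD, lt_max_iff]
    constructor
    · rintro (h | h)
      · simp only [hc]; linarith
      · linarith
    · intro h; left; simp only [hc] at h; linarith
  have hSmeas : MeasurableSet {y : ℝ | c < y ^ 2} :=
    measurableSet_lt measurable_const (by fun_prop)
  have hSeq : {y : ℝ | c < y ^ 2} = Set.Iio (-b) ∪ Set.Ioi b := by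
    ext y
    simp only [Set.mem_setOf_eq, Set.mem_union, Set.mem_Iio, Set.mem_Ioi]
    have h' : c < y ^ 2 ↔ b < |y| := by
      rw [hb, ← Real.sqrt_sq_eq_abs, Real.sqrt_lt_sqrt_iff hc0.le]
    rw [h', lt_abs, or_comm, lt_neg]
  have h1 : ℙ {ω | x < D ω}
      = ENNReal.ofReal (∫ y in {y : ℝ | c < y ^ 2}, gaussianPDFReal 0 1 y) := by
    rw [hset, ← Measure.map_apply_of_aemeasurable hZm hSmeas, hZ,
      gaussianReal_apply_eq_integral _ one_ne_zero]
  have hpdf : ∀ y : ℝ, gaussianPDFReal 0 1 y = (Real.sqrt (2*π))⁻¹ * Real.exp (-y^2/2) := by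
    intro y
    simp [gaussianPDFReal]
    try ring_nf
  have hint : IntegrableOn (gaussianPDFReal 0 1) (Set.Iio (-b)) ∧
      IntegrableOn (gaussianPDFReal 0 1) (Set.Ioi b) :=
    ⟨(integrable_gaussianPDFReal 0 1).integrableOn, (integrable_gaussianPDFReal 0 1).integrableOn⟩
  have hdisj : Disjoint (Set.Iio (-b)) (Set.Ioi b) :=
    (Set.Iio_disjoint_Ici (by linarith)).mono_right Set.Ioi_subset_Ici_self
  have hsym : ∫ y in Set.Iio (-b), gaussianPDFReal 0 1 y
      = ∫ y in Set.Ioi b, gaussianPDFReal 0 1 y := by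
    rw [setIntegral_congr_set Iio_ae_eq_Iic, ← integral_comp_neg_Ioi]
    refine setIntegral_congr_fun measurableSet_Ioi (fun y _ => ?_)
    rw [hpdf, hpdf]
    ring_nf
  have h2 : ∫ y in {y : ℝ | c < y ^ 2}, gaussianPDFReal 0 1 y
      = 2 * ∫ y in Set.Ioi b, gaussianPDFReal 0 1 y := by
    rw [hSeq, setIntegral_union hdisj measurableSet_Ioi hint.1 hint.2, hsym]
    try ring
  have h3 : ∫ y in Set.Ioi b, gaussianPDFReal 0 1 y
      = (Real.sqrt (2*π))⁻¹ * ∫ y in Set.Ioi b, Real.exp (-y^2/2) := by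
    rw [← integral_const_mul]
    exact setIntegral_congr_fun measurableSet_Ioi (fun y _ => hpdf y)
  have h4 : ∫ t in Set.Ioi (c/2), f t
      = Real.sqrt 2 * ∫ y in Set.Ioi b, Real.exp (-y^2/2) := by
    rw [← hbsq]; exact stc_subst hb0
  have h5 : ∫ t in Set.Ioi (c/2), f t ≤ Real.exp (-x/2) * ∫ t in Set.Ioi (α/2), f t := by
    have hceq : c / 2 = α/2 + x/2 := by rw [hc]; ring
    have hcont : ContinuousOn (fun s : ℝ => f (s + x/2)) (Set.Ioi (α/2)) := by
      simp only [hf]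
      intro s hs
      simp only [Set.mem_Ioi] at hs
      have hs0 : (0:ℝ) < s + x/2 := by linarith
      have hadd : ContinuousAt (fun s : ℝ => s + x/2) s := by fun_prop
      have hc1 : ContinuousAt (fun s : ℝ => (s + x/2) ^ (-(1:ℝ)/2)) s :=
        ContinuousAt.comp (g := fun y : ℝ => y ^ (-(1:ℝ)/2)) (f := fun s : ℝ => s + x/2)
          (Real.continuousAt_rpow_const (s + x/2) _ (Or.inl hs0.ne')) hadd
      have hc2 : ContinuousAt (fun s : ℝ => Real.exp (-(s + x/2))) s := by fun_prop
      exact (hc1.mul hc2).continuousWithinAt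
    have hptwise : ∀ s ∈ Set.Ioi (α/2), f (s + x/2) ≤ Real.exp (-x/2) * f s := by
      intro s hs
      simp only [Set.mem_Ioi] at hs
      have hs0 : 0 < s := by linarith
      simp only [hf]
      rw [show -(s + x/2) = -s + -(x/2) by ring, Real.exp_add]
      have hb1 : (s + x/2) ^ (-(1:ℝ)/2) ≤ s ^ (-(1:ℝ)/2) :=
        Real.rpow_le_rpow_of_nonpos hs0 (by linarith) (by norm_num)
      calc (s + x/2) ^ (-(1:ℝ)/2) * (Real.exp (-s) * Real.exp (-(x/2)))
          ≤ s ^ (-(1:ℝ)/2) * (Real.exp (-s) * Real.exp (-(x/2))) := by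
            apply mul_le_mul_of_nonneg_right hb1; positivity
        _ = Real.exp (-x/2) * (s ^ (-(1:ℝ)/2) * Real.exp (-s)) := by
            rw [show -x/2 = -(x/2) by ring]; ring
    have hnonneg : ∀ s ∈ Set.Ioi (α/2), 0 ≤ f (s + x/2) := by
      intro s hs
      simp only [Set.mem_Ioi] at hs
      have : (0:ℝ) < s + x/2 := by linarith
      simp only [hf]; positivity
    have hintR : IntegrableOn f (Set.Ioi (α/2)) := stc_int' (by positivity)
    have hintL : IntegrableOn (fun s => f (s + x/2)) (Set.Ioi (α/2)) := by
      refine Integrable.mono (hintR.const_mul (Real.exp (-x/2)))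
        (hcont.aestronglyMeasurable measurableSet_Ioi) ?_
      filter_upwards [ae_restrict_mem measurableSet_Ioi] with s hs
      simp only [Set.mem_Ioi] at hs
      have hs0 : 0 < s := by linarith
      rw [Real.norm_eq_abs, Real.norm_eq_abs,
        abs_of_nonneg (hnonneg s hs), abs_of_nonneg (by simp only [hf]; positivity)]
      exact hptwise s hs
    rw [hceq, stc_trans (α/2) (x/2) f, ← integral_const_mul]
    exact setIntegral_mono_on hintL (hintR.const_mul _) measurableSet_Ioi hptwise
  have hfg : ∀ t : ℝ, Real.exp (-t) * t ^ ((1:ℝ)/2 - 1) = f t := by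
    intro t; simp only [hf]; rw [mul_comm]; norm_num
  have hdisj2 : Disjoint (Set.Ioc (0:ℝ) (α/2)) (Set.Ioi (α/2)) :=
    Set.Ioc_disjoint_Ioi le_rfl
  have hGamma : Real.Gamma (1/2)
      = (∫ t in Set.Ioc (0:ℝ) (α/2), f t) + ∫ t in Set.Ioi (α/2), f t := by
    rw [Real.Gamma_eq_integral (by norm_num : (0:ℝ) < 1/2),
      show (∫ t in Set.Ioi (0:ℝ), Real.exp (-t) * t ^ ((1:ℝ)/2 - 1))
          = ∫ t in Set.Ioi (0:ℝ), f t from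
        setIntegral_congr_fun measurableSet_Ioi (fun t _ => hfg t),
      ← Set.Ioc_union_Ioi_eq_Ioi (by positivity : (0:ℝ) ≤ α/2),
      setIntegral_union hdisj2 measurableSet_Ioi
        (stc_int.mono_set Set.Ioc_subset_Ioi_self) (stc_int' (by positivity))]
  have hGpos : (0:ℝ) < Real.Gamma (1/2) := by
    rw [Real.Gamma_one_half_eq]; positivity
  have h1p : 1 - p = (∫ t in Set.Ioi (α/2), f t) / Real.Gamma (1/2) := by
    rw [hp]
    field_simp
    linarith [hGamma]
  rw [h1]
  apply ENNReal.ofReal_le_ofReal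
  rw [h2, h3, h1p]
  have hπ : Real.sqrt (2*π) = Real.sqrt 2 * Real.sqrt π := Real.sqrt_mul (by norm_num) _
  have hs2 : (0:ℝ) < Real.sqrt 2 := Real.sqrt_pos.2 (by norm_num)
  have hsπ : (0:ℝ) < Real.sqrt π := Real.sqrt_pos.2 pi_pos
  have hGπ : Real.Gamma (1/2) = Real.sqrt π := Real.Gamma_one_half_eq
  have h22 : Real.sqrt 2 * Real.sqrt 2 = 2 := Real.mul_self_sqrt (by norm_num)
  have hI : ∫ y in Set.Ioi b, Real.exp (-y^2/2)
      = (∫ t in Set.Ioi (c/2), f t) / Real.sqrt 2 := by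
    rw [h4]; field_simp
  rw [hGπ, hπ, hI]
  set T : ℝ := ∫ t in Set.Ioi (c/2), f t with hT
  set T' : ℝ := ∫ t in Set.Ioi (α/2), f t with hT'
  have hL : 2 * ((Real.sqrt 2 * Real.sqrt π)⁻¹ * (T / Real.sqrt 2)) = T / Real.sqrt π := by
    have i2 : (Real.sqrt 2)⁻¹ * (Real.sqrt 2)⁻¹ = 2⁻¹ := by rw [← mul_inv, h22]
    rw [mul_inv, div_eq_mul_inv, div_eq_mul_inv]
    linear_combination 2 * T * (Real.sqrt π)⁻¹ * i2
  rw [hL, show T' / Real.sqrt π * Real.exp (-x/2)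
      = (Real.exp (-x/2) * T') / Real.sqrt π by ring]
  exact (div_le_div_iff_of_pos_right hsπ).2 h5
end

section
/- Let H ~ χ²_s(γ) be noncentral chi-squared with s degrees of freedom and noncentrality γ, and let α, β, y > 0. If γ ≥ 4y + β + s(α − 1) + 2√(y((2α − 1)s + 2β + 4y)), then P(H > β + sα) ≥ 1 − exp(−y). -/
/-!
For `λ ≥ 0` the Laplace transform of `H = ∑ (Zᵢ + aᵢ)²` is `exp (-λγ/(1 + 2λ)) (1 + 2λ)^(-s/2)`,
and the elementary bounds `1/(1 + 2λ) ≥ 1 - 2λ`, `log (1 + 2λ) ≥ 2λ - 2λ²` turn it into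
`E exp (-λH) ≤ exp (-λ(s + γ) + λ²(s + 2γ))`. Chernoff's bound at `λ = √(y/(s + 2γ))` gives Birgé's
lower tail `P(H ≤ s + γ - 2√((s + 2γ)y)) ≤ exp (-y)`, and the hypothesis on `γ` places `β + sα`
below this threshold.
-/

open MeasureTheory ProbabilityTheory Real

lemma sub_sq_div_two_le_log_one_add {u : ℝ} (hu : 0 ≤ u) : u - u ^ 2 / 2 ≤ log (1 + u) := by
  refine le_trans ?_ (le_log_one_add_of_nonneg hu)
  rw [le_div_iff₀ (by linarith)]
  nlinarith [pow_nonneg hu 3]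

/-- Completing the square: `-x²/2 + c(x + a)² = -(1/2 - c)(x - m)² + ca²/(1 - 2c)`
with `m = ac/(1/2 - c)`. -/
lemma integral_exp_mul_add_sq_gaussianReal {c : ℝ} (hc : c < 1 / 2) (a : ℝ) :
    ∫ x, exp (c * (x + a) ^ 2) ∂gaussianReal 0 1 =
      exp (c * a ^ 2 / (1 - 2 * c)) / √(1 - 2 * c) := by
  set b : ℝ := 1 / 2 - c
  have hb : 0 < b := by simp only [b]; linarith
  have h2c : 1 - 2 * c ≠ 0 := by linarith
  have hcomplete : ∀ x, gaussianPDFReal 0 1 x • exp (c * (x + a) ^ 2) =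
      (√(2 * π))⁻¹ * exp (c * a ^ 2 / (1 - 2 * c)) * exp (-b * (x - a * c / b) ^ 2) := by
    intro x
    rw [gaussianPDFReal, smul_eq_mul, NNReal.coe_one, mul_one, mul_assoc, mul_assoc,
      ← exp_add, ← exp_add]
    congr 2
    simp only [b]
    field_simp
    ring
  have hnorm : (√(2 * π))⁻¹ * √(π / b) = (√(1 - 2 * c))⁻¹ := by
    rw [← sqrt_inv, ← sqrt_mul (by positivity), ← sqrt_inv]
    congr 1
    simp only [b]
    field_simp
  rw [integral_gaussianReal_eq_integral_smul one_ne_zero, funext hcomplete, integral_const_mul,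
    integral_sub_right_eq_self (fun x => exp (-b * x ^ 2)), integral_gaussian, mul_right_comm,
    hnorm, inv_mul_eq_div]

section ChiSquared

variable {Ω ι : Type*} [MeasurableSpace Ω] {μ : Measure Ω}

lemma mgf_add_sq_of_map_eq_gaussianReal {X : Ω → ℝ} (hX : μ.map X = gaussianReal 0 1)
    (a : ℝ) {t : ℝ} (ht : t < 1 / 2) :
    mgf (fun ω => (X ω + a) ^ 2) μ t = exp (t * a ^ 2 / (1 - 2 * t)) / √(1 - 2 * t) := by
  have hXm : AEMeasurable X μ :=
    .of_map_ne_zero (by rw [hX]; exact IsProbabilityMeasure.ne_zero _)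
  rw [mgf, ← integral_exp_mul_add_sq_gaussianReal ht, ← hX,
    integral_map hXm (by fun_prop)]

variable [Fintype ι]

lemma mgf_sum_add_sq (Z : ι → Ω → ℝ) (hindep : iIndepFun Z μ)
    (hlaw : ∀ i, μ.map (Z i) = gaussianReal 0 1) (a : ι → ℝ) {t : ℝ} (ht : t < 1 / 2) :
    mgf (fun ω => ∑ i, (Z i ω + a i) ^ 2) μ t =
      exp (t * (∑ i, a i ^ 2) / (1 - 2 * t)) / √(1 - 2 * t) ^ Fintype.card ι := by
  have hZm (i : ι) : AEMeasurable (Z i) μ :=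
    .of_map_ne_zero (by rw [hlaw i]; exact IsProbabilityMeasure.ne_zero _)
  have hsum : (fun ω => ∑ i, (Z i ω + a i) ^ 2) = ∑ i, fun ω => (Z i ω + a i) ^ 2 := by
    ext ω
    simp only [Finset.sum_apply]
  rw [hsum, (hindep.comp (fun i x => (x + a i) ^ 2) fun i => by fun_prop).mgf_sum₀
      (X := fun i ω => (Z i ω + a i) ^ 2) (fun i => by fun_prop),
    Finset.prod_congr rfl fun i _ => mgf_add_sq_of_map_eq_gaussianReal (hlaw i) (a i) ht,
    Finset.prod_div_distrib, Finset.prod_const, Finset.card_univ, ← exp_sum,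
    ← Finset.sum_div, ← Finset.mul_sum]

lemma mgf_sum_add_sq_neg_le (Z : ι → Ω → ℝ) (hindep : iIndepFun Z μ)
    (hlaw : ∀ i, μ.map (Z i) = gaussianReal 0 1) (a : ι → ℝ) {l : ℝ} (hl : 0 ≤ l) :
    mgf (fun ω => ∑ i, (Z i ω + a i) ^ 2) μ (-l) ≤
      exp (-l * (Fintype.card ι + ∑ i, a i ^ 2) + l ^ 2 * (Fintype.card ι + 2 * ∑ i, a i ^ 2)) := by
  rw [mgf_sum_add_sq Z hindep hlaw a (by linarith), show 1 - 2 * -l = 1 + 2 * l by ring]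
  set γ := ∑ i, a i ^ 2
  have hγ : 0 ≤ γ := Finset.sum_nonneg fun i _ => sq_nonneg (a i)
  have hnum : -l * γ / (1 + 2 * l) ≤ -l * γ + 2 * l ^ 2 * γ := by
    rw [div_le_iff₀ (by linarith)]
    nlinarith [mul_nonneg (pow_nonneg hl 3) hγ]
  have hden : exp (l - l ^ 2) ≤ √(1 + 2 * l) := by
    rw [le_sqrt (exp_pos _).le (by linarith), sq, ← exp_add, ← le_log_iff_exp_le (by linarith)]
    linarith [sub_sq_div_two_le_log_one_add (mul_nonneg zero_le_two hl)]
  calc exp (-l * γ / (1 + 2 * l)) / √(1 + 2 * l) ^ Fintype.card ι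
      ≤ exp (-l * γ + 2 * l ^ 2 * γ) / exp (l - l ^ 2) ^ Fintype.card ι := by
        gcongr
    _ = _ := by
        rw [← exp_nat_mul, ← exp_sub]
        ring_nf

theorem measure_sum_add_sq_le_le_exp (Z : ι → Ω → ℝ) (hindep : iIndepFun Z μ)
    (hlaw : ∀ i, μ.map (Z i) = gaussianReal 0 1) (a : ι → ℝ)
    (hV : 0 < Fintype.card ι + 2 * ∑ i, a i ^ 2) {y : ℝ} (hy : 0 ≤ y) :
    μ {ω | ∑ i, (Z i ω + a i) ^ 2 ≤
        Fintype.card ι + ∑ i, a i ^ 2 - 2 * √((Fintype.card ι + 2 * ∑ i, a i ^ 2) * y)} ≤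
      ENNReal.ofReal (exp (-y)) := by
  have := hindep.isProbabilityMeasure
  set γ := ∑ i, a i ^ 2
  set V : ℝ := Fintype.card ι + 2 * γ
  set l := √(y / V)
  have hl : 0 ≤ l := sqrt_nonneg _
  have hlV : l ^ 2 * V = y := by
    rw [sq_sqrt (div_nonneg hy hV.le)]
    field_simp
  have hlsqrt : l * √(V * y) = y := by
    rw [← sqrt_mul (div_nonneg hy hV.le), show y / V * (V * y) = y ^ 2 by field_simp,
      sqrt_sq hy]
  have hint : Integrable (fun ω => exp (-l * ∑ i, (Z i ω + a i) ^ 2)) μ := by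
    refine .of_integral_ne_zero ?_
    change mgf (fun ω => ∑ i, (Z i ω + a i) ^ 2) μ (-l) ≠ 0
    rw [mgf_sum_add_sq Z hindep hlaw a (by linarith)]
    exact (div_pos (exp_pos _) (pow_pos (sqrt_pos.2 (by linarith)) _)).ne'
  rw [ENNReal.le_ofReal_iff_toReal_le (measure_ne_top _ _) (exp_pos _).le, ← measureReal_def]
  calc _ ≤ exp (-(-l) * (Fintype.card ι + γ - 2 * √(V * y))) *
          mgf (fun ω => ∑ i, (Z i ω + a i) ^ 2) μ (-l) :=
        measure_le_le_exp_mul_mgf _ (neg_nonpos.2 hl) hint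
    _ ≤ exp (-(-l) * (Fintype.card ι + γ - 2 * √(V * y))) *
          exp (-l * (Fintype.card ι + γ) + l ^ 2 * V) := by
        gcongr
        exact mgf_sum_add_sq_neg_le Z hindep hlaw a hl
    _ = exp (-y) := by
        rw [← exp_add]
        congr 1
        linear_combination (-2) * hlsqrt + hlV

end ChiSquared

lemma le_sub_two_sqrt_of_sparse_signal {n γ α β y : ℝ} (hy : 0 ≤ y)
    (hγ : γ ≥ 4 * y + β + n * (α - 1) + 2 * √(y * ((2 * α - 1) * n + 2 * β + 4 * y))) :
    β + n * α ≤ n + γ - 2 * √((n + 2 * γ) * y) := by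
  set d := n + γ - (β + n * α)
  set I := (2 * α - 1) * n + 2 * β + 4 * y
  have hd : 2 * √(y * I) ≤ d - 4 * y := by simp only [d]; linarith
  have hI : 4 * (y * I) ≤ (d - 4 * y) ^ 2 := by
    rcases le_total 0 (y * I) with h | h
    · nlinarith [sq_sqrt h, sqrt_nonneg (y * I)]
    · nlinarith
  have hV : n + 2 * γ = 2 * d + I - 4 * y := by simp only [d, I]; ring
  suffices √((n + 2 * γ) * y) ≤ d / 2 by linarith
  rw [sqrt_le_iff, hV]
  constructor
  · linarith [sqrt_nonneg (y * I)]
  · nlinarith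

theorem noncentral_chisq_sparse_power_general
    {Ω : Type*} [MeasureSpace Ω] [IsProbabilityMeasure (ℙ : Measure Ω)]
    (s : ℕ) (Z : Fin s → Ω → ℝ)
    (hindep : iIndepFun Z ℙ)
    (hlaw : ∀ i, Measure.map (Z i) ℙ = gaussianReal 0 1)
    (a : Fin s → ℝ) (γ : ℝ) (hγdef : ∑ i, (a i) ^ 2 = γ)
    (H : Ω → ℝ) (hH : ∀ ω, H ω = ∑ i, (Z i ω + a i) ^ 2)
    (α β y : ℝ) (hβ : 0 < β) (hy : 0 < y)
    (hγ : γ ≥ 4 * y + β + s * (α - 1) +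
      2 * Real.sqrt (y * ((2 * α - 1) * s + 2 * β + 4 * y))) :
    ENNReal.ofReal (1 - Real.exp (-y)) ≤ ℙ {ω | β + s * α < H ω} := by
  obtain rfl := funext hH
  subst hγdef
  have hthreshold := le_sub_two_sqrt_of_sparse_signal hy.le hγ
  have hV : 0 < (s : ℝ) + 2 * ∑ i, a i ^ 2 := by
    rcases Nat.eq_zero_or_pos s with rfl | hs
    · simp only [Nat.cast_zero, zero_mul, zero_add] at hthreshold ⊢
      linarith [sqrt_nonneg ((2 * ∑ i, a i ^ 2) * y)]
    · have : (1 : ℝ) ≤ s := by exact_mod_cast hs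
      linarith [Finset.sum_nonneg fun i (_ : i ∈ Finset.univ) => sq_nonneg (a i)]
  have hlower := measure_sum_add_sq_le_le_exp Z hindep hlaw a (by simpa using hV) hy.le
  rw [Fintype.card_fin] at hlower
  have hcompl : {ω | β + s * α < ∑ i, (Z i ω + a i) ^ 2} =
      {ω | ∑ i, (Z i ω + a i) ^ 2 ≤ β + s * α}ᶜ := by
    ext ω
    simp [not_le]
  calc ENNReal.ofReal (1 - exp (-y)) = 1 - ENNReal.ofReal (exp (-y)) := by
        rw [ENNReal.ofReal_sub _ (exp_pos _).le, ENNReal.ofReal_one]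
    _ ≤ 1 - ℙ {ω | ∑ i, (Z i ω + a i) ^ 2 ≤ β + s * α} :=
        tsub_le_tsub_left ((measure_mono fun ω hω => le_trans hω hthreshold).trans hlower) 1
    _ ≤ _ := by
        rw [tsub_le_iff_left, hcompl]
        exact measure_univ.symm.le.trans (measure_univ_le_add_compl _)

/-- Sparse-change power bound: if `H ~ χ²_s(γ)` with
`γ ≥ 4y + β + s(α - 1) + 2√(y((2α - 1)s + 2β + 4y))`,
then `P(H > β + sα) ≥ 1 - exp(-y)`. -/
theorem noncentral_chisq_sparse_power
    {Ω : Type*} [MeasureSpace Ω] [IsProbabilityMeasure (ℙ : Measure Ω)]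
    (s : ℕ) (Z : Fin s → Ω → ℝ)
    (hindep : iIndepFun Z ℙ)
    (hlaw : ∀ i, Measure.map (Z i) ℙ = gaussianReal 0 1)
    (a : Fin s → ℝ) (γ : ℝ) (hγdef : ∑ i, (a i) ^ 2 = γ)
    (H : Ω → ℝ) (hH : ∀ ω, H ω = ∑ i, (Z i ω + a i) ^ 2)
    (α β y : ℝ) (hα : 0 < α) (hβ : 0 < β) (hy : 0 < y)
    (hγ : γ ≥ 4 * y + β + s * (α - 1) +
      2 * Real.sqrt (y * ((2 * α - 1) * s + 2 * β + 4 * y))) :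
    ENNReal.ofReal (1 - Real.exp (-y)) ≤ ℙ {ω | β + s * α < H ω} :=
  noncentral_chisq_sparse_power_general s Z hindep hlaw a γ hγdef H hH α β y hβ hy hγ
end

section
/- In an asymptotic regime where d = n^κ for some κ > 0, |S₁| = d^γ with 0 < γ < 1, α = 2 log d, β ≍ (J+ε) log n and K = β + d + √(2βd), the sparse detection threshold V_S = 4δ log a + (β + |S₁|α) − |S₁| + 2√(δ log a(4δ log a + 2(β + |S₁|α) − |S₁|)) with a = max{n,d} satisfies V_S/(2|S₁| log d) → 1 as n → ∞, and the dense threshold V_D = 4δ log a + K − d + 2√(δ log a(4δ log a + 2K − d)) satisfies V_D/√(d log n) → c for some constant c > 0. Consequently, for large n, min{V_S, V_D} = V_S whenever γ < 1/2 and min{V_S, V_D} = V_D whenever γ > 1/2. -/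
/-!
Both thresholds have the shape `4δℓ + B - D + 2√(δℓ(4δℓ + 2B - D))` with `ℓ = log a ≍ log n`.
In the sparse one `B - D ≈ 2|S₁| log d` dominates and the root is of lower order, so
`V_S ∼ 2|S₁| log d`. In the dense one `B - D = β + √(2βd)` and the root is
`≈ √(δ max(1, κ) d log n)`, so `V_D ∼ (√(2(J + ε)) + 2√(δ max(1, κ))) √(d log n)`.
The squared ratio of the two scales is `≍ n^{κ(2γ - 1)} log n`, which tends to `0` for
`γ < 1/2` and to `∞` for `γ > 1/2`.
-/

open Filter Real Topology

/-- `V(δ, ℓ, B, D)`: with `ℓ = log a`, the paper's `V_S` is `V(δ, ℓ, β + |S₁|α, |S₁|)` and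
`V_D` is `V(δ, ℓ, K, d)`. -/
noncomputable def threshold (δ ℓ B D : ℝ) : ℝ :=
  4 * δ * ℓ + B - D + 2 * √(δ * ℓ * (4 * δ * ℓ + 2 * B - D))

section Asymptotics

variable {ι : Type*} {l : Filter ι}

theorem tendsto_threshold_div {δ b ρ : ℝ} {ℓ B D f : ι → ℝ} (hf : ∀ᶠ i in l, 0 < f i)
    (hℓ : Tendsto (fun i => ℓ i / f i) l (𝓝 0))
    (hBD : Tendsto (fun i => (B i - D i) / f i) l (𝓝 b))
    (hroot : Tendsto (fun i => ℓ i * (4 * δ * ℓ i + 2 * B i - D i) / f i ^ 2) l (𝓝 ρ)) :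
    Tendsto (fun i => threshold δ (ℓ i) (B i) (D i) / f i) l (𝓝 (b + 2 * √(δ * ρ))) := by
  have hlim := ((hℓ.const_mul (4 * δ)).add hBD).add ((hroot.const_mul δ).sqrt.const_mul 2)
  rw [mul_zero, zero_add] at hlim
  refine hlim.congr' ?_
  filter_upwards [hf] with i hfi
  have hroot_eq : √(δ * (ℓ i * (4 * δ * ℓ i + 2 * B i - D i) / f i ^ 2))
      = √(δ * ℓ i * (4 * δ * ℓ i + 2 * B i - D i)) / f i := by
    rw [← mul_div_assoc, sqrt_div' _ (sq_nonneg _), sqrt_sq hfi.le, mul_assoc δ]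
  rw [hroot_eq, threshold]
  field_simp
  ring

theorem tendsto_threshold_div_of_sparse {δ κ m c : ℝ} {L S : ι → ℝ} (hκ : 0 < κ)
    (hL : Tendsto L l atTop) (hS : Tendsto S l atTop) :
    Tendsto (fun i => threshold δ (m * L i) (c * L i + S i * (2 * (κ * L i))) (S i) /
      (2 * S i * (κ * L i))) l (𝓝 1) := by
  have hpos : ∀ᶠ i in l, 0 < S i ∧ 0 < L i :=
    (hS.eventually_gt_atTop 0).and (hL.eventually_gt_atTop 0)
  have hSinv : Tendsto (fun i => (S i)⁻¹) l (𝓝 0) := hS.inv_tendsto_atTop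
  have hLinv : Tendsto (fun i => (L i)⁻¹) l (𝓝 0) := hL.inv_tendsto_atTop
  suffices h : Tendsto (fun i => threshold δ (m * L i) (c * L i + S i * (2 * (κ * L i))) (S i) /
      (2 * S i * (κ * L i))) l (𝓝 (1 + 2 * √(δ * 0))) by simpa using h
  refine tendsto_threshold_div ?_ ?_ ?_ ?_
  · filter_upwards [hpos] with i ⟨hSi, hLi⟩
    positivity
  · refine (mul_zero (m / (2 * κ)) ▸ hSinv.const_mul (m / (2 * κ))).congr' ?_
    filter_upwards [hpos] with i ⟨hSi, hLi⟩
    field_simp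
  · have := ((hSinv.const_mul (c / (2 * κ))).add_const 1).sub (hLinv.const_mul (2 * κ)⁻¹)
    simp only [mul_zero, zero_add, sub_zero] at this
    refine this.congr' ?_
    filter_upwards [hpos] with i ⟨hSi, hLi⟩
    field_simp
  · have := (((hSinv.pow 2).const_mul (m * (4 * δ * m + 2 * c) / (4 * κ ^ 2))).add
      (hSinv.const_mul (m / κ))).sub ((hSinv.mul hLinv).const_mul (m / (4 * κ ^ 2)))
    simp only [ne_eq, OfNat.ofNat_ne_zero, not_false_eq_true, zero_pow, mul_zero, add_zero,
      sub_zero] at this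
    refine this.congr' ?_
    filter_upwards [hpos] with i ⟨hSi, hLi⟩
    field_simp
    ring

theorem tendsto_threshold_div_of_dense {δ m c : ℝ} {L D : ι → ℝ} (hL : ∀ᶠ i in l, 0 < L i)
    (hD : ∀ᶠ i in l, 0 < D i) (hLD : Tendsto (fun i => L i / D i) l (𝓝 0)) :
    Tendsto (fun i => threshold δ (m * L i) (c * L i + D i + √(2 * (c * L i) * D i)) (D i) /
      √(D i * L i)) l (𝓝 (√(2 * c) + 2 * √(δ * m))) := by
  have ht : Tendsto (fun i => √(L i / D i)) l (𝓝 0) := by simpa using hLD.sqrt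
  -- everything is a polynomial in `g = √(D L)`, `t = √(L / D)` and `√(2 c)`
  have hsubst : ∀ᶠ i in l, L i = √(D i * L i) * √(L i / D i) ∧
      D i = √(D i * L i) / √(L i / D i) ∧ √(2 * (c * L i) * D i) = √(2 * c) * √(D i * L i) ∧
      0 < √(D i * L i) ∧ 0 < √(L i / D i) := by
    filter_upwards [hL, hD] with i hLi hDi
    refine ⟨?_, ?_, ?_, by positivity, by positivity⟩
    · rw [← sqrt_mul (by positivity), show D i * L i * (L i / D i) = L i ^ 2 by field_simp,
        sqrt_sq hLi.le]
    · rw [← sqrt_div' _ (by positivity), show D i * L i / (L i / D i) = D i ^ 2 by field_simp,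
        sqrt_sq hDi.le]
    · rw [← sqrt_mul' _ (by positivity)]
      ring_nf
  refine tendsto_threshold_div ?_ ?_ ?_ ?_
  · filter_upwards [hsubst] with i h
    exact h.2.2.2.1
  · refine (mul_zero m ▸ ht.const_mul m).congr' ?_
    filter_upwards [hsubst] with i ⟨hLi, _, _, hg, htpos⟩
    generalize √(D i * L i) = g at *
    generalize √(L i / D i) = t at *
    rw [hLi]
    field_simp
  · refine (zero_add (√(2 * c)) ▸ (mul_zero c ▸ ht.const_mul c).add_const (√(2 * c))).congr' ?_
    filter_upwards [hsubst] with i ⟨hLi, hDi, hroot, hg, htpos⟩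
    generalize √(D i * L i) = g at *
    generalize √(L i / D i) = t at *
    rw [hroot, hLi, hDi]
    field_simp
    ring
  · have := (((ht.pow 2).const_mul (m * (4 * δ * m + 2 * c))).add_const m).add
      (ht.const_mul (2 * m * √(2 * c)))
    simp only [ne_eq, OfNat.ofNat_ne_zero, not_false_eq_true, zero_pow, mul_zero, zero_add,
      add_zero] at this
    refine this.congr' ?_
    filter_upwards [hsubst] with i ⟨hLi, hDi, hroot, hg, htpos⟩
    generalize √(D i * L i) = g at *
    generalize √(L i / D i) = t at *
    rw [hroot, hLi, hDi]
    field_simp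
    ring

theorem eventually_lt_of_tendsto_div {V W f g : ι → ℝ} {a b : ℝ} (hb : 0 < b)
    (hV : Tendsto (fun i => V i / f i) l (𝓝 a)) (hW : Tendsto (fun i => W i / g i) l (𝓝 b))
    (hf : ∀ᶠ i in l, f i ≠ 0) (hg : ∀ᶠ i in l, 0 < g i)
    (hfg : Tendsto (fun i => f i / g i) l (𝓝 0)) :
    ∀ᶠ i in l, V i < W i := by
  have hVg : Tendsto (fun i => V i / g i) l (𝓝 0) := by
    refine (mul_zero a ▸ hV.mul hfg).congr' ?_
    filter_upwards [hf] with i hfi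
    rw [div_mul_div_cancel₀ hfi]
  filter_upwards [hVg.eventually_lt hW hb, hg] with i hi hgi
  exact (div_lt_div_iff_of_pos_right hgi).mp hi

end Asymptotics

theorem log_max_self_rpow {x : ℝ} (hx : 1 ≤ x) (κ : ℝ) :
    log (max x (x ^ κ)) = max 1 κ * log x := by
  have hx0 : 0 < x := one_pos.trans_le hx
  rw [strictMonoOn_log.monotoneOn.map_max hx0 (rpow_pos_of_pos hx0 κ), log_rpow hx0,
    max_mul_of_nonneg _ _ (log_nonneg hx), one_mul]

theorem tendsto_rpow_mul_log_atTop_nhds_zero {r : ℝ} (hr : r < 0) :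
    Tendsto (fun x => x ^ r * log x) atTop (𝓝 0) := by
  refine (isLittleO_log_rpow_atTop (neg_pos.mpr hr)).tendsto_div_nhds_zero.congr' ?_
  filter_upwards [eventually_gt_atTop 0] with x hx
  rw [rpow_neg hx.le, div_eq_inv_mul, inv_inv]

noncomputable def sparseThreshold (δ c κ γ x : ℝ) : ℝ :=
  threshold δ (log (max x (x ^ κ))) (c * log x + (x ^ κ) ^ γ * (2 * log (x ^ κ))) ((x ^ κ) ^ γ)

noncomputable def denseThreshold (δ c κ x : ℝ) : ℝ :=
  threshold δ (log (max x (x ^ κ))) (c * log x + x ^ κ + √(2 * (c * log x) * x ^ κ)) (x ^ κ)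

section Thresholds

variable {δ c κ γ : ℝ}

theorem tendsto_sparseThreshold_div (hκ : 0 < κ) (hγ : 0 < γ) :
    Tendsto (fun x => sparseThreshold δ c κ γ x / (2 * (x ^ κ) ^ γ * log (x ^ κ))) atTop
      (𝓝 1) := by
  have hS : Tendsto (fun x : ℝ => (x ^ κ) ^ γ) atTop atTop :=
    (tendsto_rpow_atTop hγ).comp (tendsto_rpow_atTop hκ)
  refine (tendsto_threshold_div_of_sparse (δ := δ) (m := max 1 κ) (c := c) hκ tendsto_log_atTop
    hS).congr' ?_
  filter_upwards [eventually_ge_atTop 1] with x hx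
  rw [sparseThreshold, log_max_self_rpow hx, log_rpow (one_pos.trans_le hx)]

theorem tendsto_denseThreshold_div (hκ : 0 < κ) :
    Tendsto (fun x => denseThreshold δ c κ x / √(x ^ κ * log x)) atTop
      (𝓝 (√(2 * c) + 2 * √(δ * max 1 κ))) := by
  have hlog : ∀ᶠ x : ℝ in atTop, 0 < log x := tendsto_log_atTop.eventually_gt_atTop 0
  have hpow : ∀ᶠ x : ℝ in atTop, 0 < x ^ κ := (tendsto_rpow_atTop hκ).eventually_gt_atTop 0
  refine (tendsto_threshold_div_of_dense hlog hpow
    (isLittleO_log_rpow_atTop hκ).tendsto_div_nhds_zero).congr' ?_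
  filter_upwards [eventually_ge_atTop 1] with x hx
  rw [denseThreshold, log_max_self_rpow hx]

theorem denseThreshold_limit_pos (c : ℝ) (hδ : 0 < δ) : 0 < √(2 * c) + 2 * √(δ * max 1 κ) := by
  have := sqrt_pos.mpr (mul_pos hδ (one_pos.trans_le (le_max_left 1 κ)))
  positivity

theorem sparse_scale_div_dense_scale {x : ℝ} (hx : 1 < x) (κ γ : ℝ) :
    2 * (x ^ κ) ^ γ * log (x ^ κ) / √(x ^ κ * log x) =
      2 * κ * √(x ^ (κ * (2 * γ - 1)) * log x) := by
  have hx0 : 0 < x := one_pos.trans hx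
  have hlog : 0 < log x := log_pos hx
  have hpow : x ^ (κ * (2 * γ - 1)) = x ^ (κ * γ) * x ^ (κ * γ) / x ^ κ := by
    rw [← rpow_add hx0, ← rpow_sub hx0]
    ring_nf
  have hnum : x ^ (κ * γ) * log x = √((x ^ (κ * γ) * log x) ^ 2) :=
    (sqrt_sq (by positivity)).symm
  rw [← rpow_mul hx0.le, log_rpow hx0, show 2 * x ^ (κ * γ) * (κ * log x) =
    2 * κ * (x ^ (κ * γ) * log x) by ring, mul_div_assoc, hnum, ← sqrt_div' _ (by positivity),
    hpow]
  congr 2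
  field_simp

theorem eventually_scales_pos (hκ : 0 < κ) :
    ∀ᶠ x : ℝ in atTop, 0 < 2 * (x ^ κ) ^ γ * log (x ^ κ) ∧ 0 < √(x ^ κ * log x) := by
  filter_upwards [eventually_gt_atTop 1] with x hx
  have hx0 : 0 < x := one_pos.trans hx
  have hlog : 0 < log x := log_pos hx
  rw [log_rpow hx0]
  constructor <;> positivity

theorem eventually_sparseThreshold_lt_denseThreshold (hκ : 0 < κ) (hγ0 : 0 < γ) (hγ : γ < 1 / 2)
    (hδ : 0 < δ) : ∀ᶠ x in atTop, sparseThreshold δ c κ γ x < denseThreshold δ c κ x := by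
  have hratio : Tendsto (fun x => 2 * (x ^ κ) ^ γ * log (x ^ κ) / √(x ^ κ * log x)) atTop
      (𝓝 0) := by
    have := ((tendsto_rpow_mul_log_atTop_nhds_zero (r := κ * (2 * γ - 1)) (by nlinarith)).sqrt
      ).const_mul (2 * κ)
    rw [sqrt_zero, mul_zero] at this
    refine this.congr' ?_
    filter_upwards [eventually_gt_atTop 1] with x hx
    rw [sparse_scale_div_dense_scale hx]
  have hscales := eventually_scales_pos (γ := γ) hκ
  exact eventually_lt_of_tendsto_div (denseThreshold_limit_pos c hδ)
    (tendsto_sparseThreshold_div hκ hγ0) (tendsto_denseThreshold_div hκ)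
    (hscales.mono fun _ h => h.1.ne') (hscales.mono fun _ h => h.2) hratio

theorem eventually_denseThreshold_lt_sparseThreshold (hκ : 0 < κ) (hγ : 1 / 2 < γ) :
    ∀ᶠ x in atTop, denseThreshold δ c κ x < sparseThreshold δ c κ γ x := by
  have hratio : Tendsto (fun x => √(x ^ κ * log x) / (2 * (x ^ κ) ^ γ * log (x ^ κ))) atTop
      (𝓝 0) := by
    have hr : 0 < κ * (2 * γ - 1) := mul_pos hκ (by linarith)
    have := ((tendsto_sqrt_atTop.comp ((tendsto_rpow_atTop hr).atTop_mul_atTop₀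
      tendsto_log_atTop)).const_mul_atTop (mul_pos two_pos hκ)).inv_tendsto_atTop
    refine this.congr' ?_
    filter_upwards [eventually_gt_atTop 1] with x hx
    rw [Pi.inv_apply, Function.comp_apply, ← sparse_scale_div_dense_scale hx, inv_div]
  have hscales := eventually_scales_pos (γ := γ) hκ
  exact eventually_lt_of_tendsto_div one_pos (tendsto_denseThreshold_div hκ)
    (tendsto_sparseThreshold_div hκ (by linarith)) (hscales.mono fun _ h => h.2.ne')
    (hscales.mono fun _ h => h.1) hratio

end Thresholds

theorem subset_thresholds_adaptivity_general
    (κ γ δ J ε : ℝ) (hκ : 0 < κ) (hγ0 : 0 < γ)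
    (hδ : 0 < δ)
    (d s α β K a Vs Vd : ℕ → ℝ)
    (hd : ∀ n, d n = (n : ℝ) ^ κ)
    (hs : ∀ n, s n = d n ^ γ)
    (hα : ∀ n, α n = 2 * Real.log (d n))
    (hβ : ∀ n, β n = (J + ε) * Real.log n)
    (hK : ∀ n, K n = β n + d n + Real.sqrt (2 * β n * d n))
    (ha : ∀ n, a n = max (n : ℝ) (d n))
    (hVs : ∀ n, Vs n = 4 * δ * Real.log (a n) + (β n + s n * α n) - s n +
      2 * Real.sqrt (δ * Real.log (a n) *
        (4 * δ * Real.log (a n) + 2 * (β n + s n * α n) - s n)))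
    (hVd : ∀ n, Vd n = 4 * δ * Real.log (a n) + K n - d n +
      2 * Real.sqrt (δ * Real.log (a n) *
        (4 * δ * Real.log (a n) + 2 * K n - d n))) :
    Tendsto (fun n => Vs n / (2 * s n * Real.log (d n))) atTop (nhds 1) ∧
      (∃ c > (0:ℝ), Tendsto (fun n => Vd n / Real.sqrt (d n * Real.log n)) atTop
        (nhds c)) ∧
      (γ < 1/2 → ∀ᶠ n in atTop, min (Vs n) (Vd n) = Vs n) ∧
      (1/2 < γ → ∀ᶠ n in atTop, min (Vs n) (Vd n) = Vd n) := by
  have hN : Tendsto (fun n : ℕ => (n : ℝ)) atTop atTop := tendsto_natCast_atTop_atTop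
  have hVs' (n : ℕ) : Vs n = sparseThreshold δ (J + ε) κ γ n := by
    rw [hVs, hα, hβ, ha, hs, hd, sparseThreshold, threshold]
  have hVd' (n : ℕ) : Vd n = denseThreshold δ (J + ε) κ n := by
    rw [hVd, hK, hβ, ha, hd, denseThreshold, threshold]
  refine ⟨?_, ⟨_, denseThreshold_limit_pos (κ := κ) (J + ε) hδ, ?_⟩, fun hγ => ?_, fun hγ => ?_⟩
  · exact ((tendsto_sparseThreshold_div hκ hγ0).comp hN).congr fun n => by
      rw [Function.comp_apply, hVs', hs, hd]
  · exact ((tendsto_denseThreshold_div hκ).comp hN).congr fun n => by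
      rw [Function.comp_apply, hVd', hd]
  · filter_upwards [hN.eventually (eventually_sparseThreshold_lt_denseThreshold hκ hγ0 hγ hδ)]
      with n h
    rw [hVs', hVd']
    exact min_eq_left h.le
  · filter_upwards [hN.eventually (eventually_denseThreshold_lt_sparseThreshold hκ hγ)] with n h
    rw [hVs', hVd']
    exact min_eq_right h.le

/-- Asymptotic adaptivity of the SUBSET thresholds: with `d = n^κ`, `|S₁| = d^γ`,
`α = 2 log d`, `β = (J+ε) log n` and `K = β + d + √(2βd)`, the sparse threshold
`V_S` satisfies `V_S/(2|S₁| log d) → 1`, the dense threshold `V_D` satisfies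
`V_D/√(d log n) → c` for some `c > 0`, and hence eventually
`min{V_S, V_D} = V_S` if `γ < 1/2` and `min{V_S, V_D} = V_D` if `γ > 1/2`. -/
theorem subset_thresholds_adaptivity
    (κ γ δ J ε : ℝ) (hκ : 0 < κ) (hγ0 : 0 < γ) (hγ1 : γ < 1)
    (hδ : 0 < δ) (hJ : 0 < J) (hε : 0 < ε)
    (d s α β K a Vs Vd : ℕ → ℝ)
    (hd : ∀ n, d n = (n : ℝ) ^ κ)
    (hs : ∀ n, s n = d n ^ γ)
    (hα : ∀ n, α n = 2 * Real.log (d n))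
    (hβ : ∀ n, β n = (J + ε) * Real.log n)
    (hK : ∀ n, K n = β n + d n + Real.sqrt (2 * β n * d n))
    (ha : ∀ n, a n = max (n : ℝ) (d n))
    (hVs : ∀ n, Vs n = 4 * δ * Real.log (a n) + (β n + s n * α n) - s n +
      2 * Real.sqrt (δ * Real.log (a n) *
        (4 * δ * Real.log (a n) + 2 * (β n + s n * α n) - s n)))
    (hVd : ∀ n, Vd n = 4 * δ * Real.log (a n) + K n - d n +
      2 * Real.sqrt (δ * Real.log (a n) *
        (4 * δ * Real.log (a n) + 2 * K n - d n))) :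
    Tendsto (fun n => Vs n / (2 * s n * Real.log (d n))) atTop (nhds 1) ∧
      (∃ c > (0:ℝ), Tendsto (fun n => Vd n / Real.sqrt (d n * Real.log n)) atTop
        (nhds c)) ∧
      (γ < 1/2 → ∀ᶠ n in atTop, min (Vs n) (Vd n) = Vs n) ∧
      (1/2 < γ → ∀ᶠ n in atTop, min (Vs n) (Vd n) = Vd n) :=
  subset_thresholds_adaptivity_general κ γ δ J ε hκ hγ0 hδ d s α β K a Vs Vd hd hs hα hβ hK ha hVs
    hVd
end
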